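/- Let M and p be positive integers with p ≤ M, let A and B be M×M complex matrices, U a p×M complex matrix, and W an M×p complex matrix. Form the (p+2M)×(p+2M) block matrix R = [[0, 0, U],[0, 0, A],[W, B, 0]] (blocks of sizes p, M, M) and let J_p be the (p+2M)×(p+2M) diagonal matrix whose first p diagonal entries are 0 and whose remaining 2M diagonal entries are 1. Then det(J_p + R) = Σ_{m=p}^{M} (−1)^m Σ_{k,l} det U_A(k,l) · det W_B(l,k), where the inner sum runs over all pairs of subsets k, l of {1,…,M} with |k| = m − p and |l| = m; here U_A(k,l) is the m×m matrix whose first p rows are the rows of U restricted to the columns indexed by l, and whose remaining m − p rows are the rows of A indexed by k restricted to the columns indexed by l; and W_B(l,k) is the m×m matrix whose first p columns are the columns of W restricted to the rows indexed by l, and whose remaining m − p columns are the columns of B indexed by k restricted to the rows indexed by l (all index sets taken in increasing order). -/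

import Mathlib

/-- The `(p+2M) × (p+2M)` block matrix
`R = [[0, 0, U], [0, 0, A], [W, B, 0]]` with diagonal blocks of sizes
`p × p`, `M × M`, `M × M`. -/
noncomputable def tripleBlock {p M : ℕ} (A B : Matrix (Fin M) (Fin M) ℂ)
    (U : Matrix (Fin p) (Fin M) ℂ) (W : Matrix (Fin M) (Fin p) ℂ) :
    Matrix (Fin p ⊕ (Fin M ⊕ Fin M)) (Fin p ⊕ (Fin M ⊕ Fin M)) ℂ :=
  Matrix.fromBlocks 0 (Matrix.fromCols 0 U) (Matrix.fromRows 0 W)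
    (Matrix.fromBlocks 0 A B 0)

/-- The `(p+2M) × (p+2M)` matrix `J_p = diag(0_p, I_M, I_M)` whose first `p`
diagonal entries are `0` and whose remaining `2M` diagonal entries are `1`. -/
def Jp (p M : ℕ) :
    Matrix (Fin p ⊕ (Fin M ⊕ Fin M)) (Fin p ⊕ (Fin M ⊕ Fin M)) ℂ :=
  Matrix.fromBlocks 0 0 0 1

/-- `det U_A(k,l)` for subsets `k, l ⊆ {1,…,M}` with `|k| = m − p` and
`|l| = m = p + (m − p)`: the determinant of the `m × m` matrix whose first
`p` rows are the rows of `U` restricted to the columns indexed by `l`, and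
whose remaining `m − p` rows are the rows of `A` indexed by `k`, restricted
to the columns indexed by `l` (all index sets in increasing order).  Rows and
columns are indexed by `Fin p ⊕ Fin (m − p)`, identified with `Fin m` via the
order isomorphism `finSumFinEquiv`. -/
noncomputable def detUA {p M : ℕ} (U : Matrix (Fin p) (Fin M) ℂ)
    (A : Matrix (Fin M) (Fin M) ℂ) (m : ℕ) (k l : Finset (Fin M)) : ℂ :=
  if h : k.card = m - p ∧ l.card = p + (m - p) then
    Matrix.det (Matrix.of (fun (i j : Fin p ⊕ Fin (m - p)) =>
      Sum.elim
        (fun ip : Fin p =>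
          U ip (l.orderEmbOfFin h.2 (finSumFinEquiv j)))
        (fun iq : Fin (m - p) =>
          A (k.orderEmbOfFin h.1 iq) (l.orderEmbOfFin h.2 (finSumFinEquiv j)))
        i))
  else 0

/-- `det W_B(l,k)` for subsets `k, l ⊆ {1,…,M}` with `|k| = m − p` and
`|l| = m = p + (m − p)`: the determinant of the `m × m` matrix whose first
`p` columns are the columns of `W` restricted to the rows indexed by `l`, and
whose remaining `m − p` columns are the columns of `B` indexed by `k`,
restricted to the rows indexed by `l` (all index sets in increasing order). -/
noncomputable def detWB {p M : ℕ} (W : Matrix (Fin M) (Fin p) ℂ)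
    (B : Matrix (Fin M) (Fin M) ℂ) (m : ℕ) (k l : Finset (Fin M)) : ℂ :=
  if h : k.card = m - p ∧ l.card = p + (m - p) then
    Matrix.det (Matrix.of (fun (i j : Fin p ⊕ Fin (m - p)) =>
      Sum.elim
        (fun jp : Fin p =>
          W (l.orderEmbOfFin h.2 (finSumFinEquiv i)) jp)
        (fun jq : Fin (m - p) =>
          B (l.orderEmbOfFin h.2 (finSumFinEquiv i)) (k.orderEmbOfFin h.1 jq))
        j))
  else 0

/-!
Grouping the first two blocks of rows and columns writes `J_p + R` as `[[E, F], [G, 1]]` with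
`E = diag(0_p, I_M)`, `F = [U; A]` and `G = [W, B]`, whose determinant is `det (E - F G)` by the
Schur complement. Expanding `det (E + X)` multilinearly in the rows picks out the principal minors
of `X = -F G` on the index sets `{1,…,p} ∪ k`, and the Cauchy–Binet formula writes each of them as
`(-1)^m Σ_l det U_A(k,l) · det W_B(l,k)` with `m = p + |k|`. Grouping the subsets `k` by `m` gives
the formula.
-/

open Finset Function

theorem Function.injective_of_range_eq_of_card_eq {m n : Type*} [Fintype m] {s : Finset n}
    {c : m → n} (hc : Set.range c = s) (hs : s.card = Fintype.card m) : Injective c := by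
  classical
  have himage : univ.image c = s := coe_injective (by simpa using hc)
  rw [← Set.injOn_univ, ← coe_univ, ← card_image_iff, himage, hs, card_univ]

theorem Finset.sum_eq_sum_Icc_sum_powersetCard {α R : Type*} [Fintype α] [AddCommMonoid R]
    (p : ℕ) (F : ℕ → Finset α → R) (hF : ∀ m k, Fintype.card α < m → F m k = 0) :
    ∑ k : Finset α, F (p + k.card) k =
      ∑ m ∈ Icc p (Fintype.card α), ∑ k ∈ powersetCard (m - p) univ, F m k := by
  calc ∑ k : Finset α, F (p + k.card) k
      = ∑ k with p + k.card ≤ Fintype.card α, F (p + k.card) k := by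
        refine (sum_filter_of_ne fun k _ hk => ?_).symm
        by_contra hlt
        exact hk (hF _ k (not_le.mp hlt))
    _ = ∑ m ∈ Icc p (Fintype.card α),
          ∑ k with p + k.card ≤ Fintype.card α ∧ p + k.card = m, F (p + k.card) k := by
        rw [← sum_fiberwise_of_maps_to (g := fun k => p + k.card) (t := Icc p (Fintype.card α))]
        · simp_rw [filter_filter]
        · intro k hk
          simpa using (mem_filter.mp hk).2
    _ = _ := by
        refine sum_congr rfl fun m hm => sum_congr ?_ fun k hk => ?_
        · ext k
          simp only [mem_filter, mem_univ, true_and, mem_powersetCard, subset_univ]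
          simp only [mem_Icc] at hm
          omega
        · rw [(mem_powersetCard.mp hk).2, Nat.add_sub_cancel' (mem_Icc.mp hm).1]

namespace Matrix

variable {m n R : Type*} [Fintype m] [DecidableEq m] [CommRing R]

theorem det_diagonal_add [Fintype n] [DecidableEq n] (d : n → R) (X : Matrix n n R) :
    det (diagonal d + X) =
      ∑ s : Finset n, (∏ i ∈ sᶜ, d i) * det (X.submatrix ((↑) : s → n) (↑)) := by
  rw [add_comm, det_apply', ← det_apply']
  change detRowAlternating (X.row + (diagonal d).row) = _
  rw [AlternatingMap.map_add_univ]
  refine Fintype.sum_congr _ _ fun s => ?_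
  have hrows : of (s.piecewise X.row (diagonal d).row) =
      of fun i j => (if i ∈ sᶜ then d i else 1) * s.piecewise X.row (row 1) i j := by
    ext i j
    by_cases hi : i ∈ s <;> simp [hi, diagonal_apply, one_apply]
  rw [← det_piecewise_one_eq_submatrix_det, ← univ_inter sᶜ, ← prod_ite_mem]
  exact congrArg det hrows |>.trans (det_mul_column _ _)

theorem det_fromBlocks_zero_one_add {ι κ : Type*} [Fintype ι] [DecidableEq ι] [Fintype κ]
    [DecidableEq κ] (X : Matrix (ι ⊕ κ) (ι ⊕ κ) R) :
    det (fromBlocks 0 0 0 1 + X) =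
      ∑ t : Finset κ, det (X.submatrix ((↑) : (univ : Finset ι).disjSum t → ι ⊕ κ) (↑)) := by
  rw [← diagonal_zero, ← diagonal_one, fromBlocks_diagonal, det_diagonal_add,
    ← Finset.sumEquiv.symm.toEquiv.sum_comp, Fintype.sum_prod_type,
    Fintype.sum_eq_single univ]
  · refine Fintype.sum_congr _ _ fun t => ?_
    rw [prod_eq_one, one_mul]
    · rfl
    rintro (i | j) hi
    · simp at hi
    · rfl
  · intro s hs
    obtain ⟨i, hi⟩ : ∃ i, i ∉ s := by simpa [eq_univ_iff_forall] using hs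
    refine Fintype.sum_eq_zero _ fun t => ?_
    rw [prod_eq_zero (i := Sum.inl i) (by simpa using hi) rfl, zero_mul]

theorem det_submatrix_eq_det_submatrix_coe [DecidableEq n] {f : m → n} (hf : Injective f)
    {s : Finset n} (hs : Set.range f = s) (X : Matrix n n R) :
    det (X.submatrix f f) = det (X.submatrix ((↑) : s → n) (↑)) := by
  let e : m ≃ s := (Equiv.ofInjective f hf).trans (Equiv.setCongr hs)
  exact det_submatrix_equiv_self e (X.submatrix ((↑) : s → n) (↑))

theorem det_mul_eq_sum_prod_mul_det_submatrix [Fintype n] (P : Matrix m n R) (Q : Matrix n m R) :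
    det (P * Q) = ∑ f : m → n, (∏ i, P i (f i)) * det (Q.submatrix f id) := by
  have hrows : (P * Q).row = fun i => ∑ j, P i j • Q j := by
    ext i k
    simp [mul_apply]
  rw [det_apply', ← det_apply']
  change detRowAlternating.toMultilinearMap (P * Q).row = _
  rw [hrows, MultilinearMap.map_sum]
  refine Fintype.sum_congr _ _ fun f => ?_
  exact detRowAlternating.map_smul_univ (fun i => P i (f i)) fun i => Q (f i)

theorem sum_perm_prod_mul_det_submatrix (P : Matrix m n R) (Q : Matrix n m R) (c : m → n) :
    ∑ σ : Equiv.Perm m, (∏ i, P i (c (σ i))) * det (Q.submatrix (c ∘ σ) id) =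
      det (P.submatrix id c) * det (Q.submatrix c id) := by
  rw [← det_transpose (P.submatrix id c), det_apply, sum_mul]
  refine Fintype.sum_congr _ _ fun σ => ?_
  rw [show Q.submatrix (c ∘ σ) id = (Q.submatrix c id).submatrix σ id from rfl, det_permute,
    Units.smul_def, zsmul_eq_mul]
  simp only [transpose_apply, submatrix_apply, id]
  ring

/-- The Cauchy–Binet formula. -/
theorem det_mul_eq_sum_det_submatrix_mul_det_submatrix [Fintype n] [DecidableEq n]
    (P : Matrix m n R) (Q : Matrix n m R)
    (c : {l : Finset n // l.card = Fintype.card m} → m → n) (hc : ∀ l, Set.range (c l) = l) :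
    det (P * Q) = ∑ l, det (P.submatrix id (c l)) * det (Q.submatrix (c l) id) := by
  have hinj : ∀ l, Injective (c l) := fun l => injective_of_range_eq_of_card_eq (hc l) l.2
  rw [det_mul_eq_sum_prod_mul_det_submatrix, ← sum_filter_add_sum_filter_not _ Injective,
    sum_eq_zero (s := univ.filter fun f => ¬Injective f), add_zero]
  swap
  · intro f hf
    obtain ⟨i, j, hij, hne⟩ := not_injective_iff.mp (mem_filter.mp hf).2
    rw [det_zero_of_row_eq hne (by ext; simp [hij]), mul_zero]
  simp_rw [← sum_perm_prod_mul_det_submatrix, ← Fintype.sum_prod_type']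
  symm
  refine sum_bij (fun x _ => c x.1 ∘ x.2) (fun x _ => ?_) (fun x _ y _ hxy => ?_) (fun f hf => ?_)
    (fun _ _ => rfl)
  · simpa using (hinj x.1).comp x.2.injective
  · have hl : x.1 = y.1 := by
      have := congrArg Set.range hxy
      rwa [x.2.surjective.range_comp, y.2.surjective.range_comp, hc, hc, coe_inj,
        ← Subtype.ext_iff] at this
    obtain ⟨l, σ⟩ := x
    obtain ⟨l', σ'⟩ := y
    dsimp only at hl
    subst hl
    have : (σ : m → m) = σ' := (hinj l).comp_left hxy
    simp [DFunLike.coe_injective this]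
  · have hf : Injective f := (mem_filter.mp hf).2
    let l : {l : Finset n // l.card = Fintype.card m} :=
      ⟨univ.image f, by rw [card_image_of_injective _ hf, card_univ]⟩
    have hrange : ∀ i, ∃ j, c l j = f i := fun i => by
      rw [← Set.mem_range, hc, coe_image]
      exact Set.mem_image_of_mem f (mem_coe.mpr (mem_univ i))
    choose σ hσ using hrange
    have hσinj : Injective σ := fun i j hij => hf <| by rw [← hσ, ← hσ, hij]
    exact ⟨(l, Equiv.ofBijective σ (Finite.injective_iff_bijective.mp hσinj)), mem_univ _,
      funext hσ⟩

end Matrix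

open Matrix

section TripleBlock

variable {p M : ℕ} (A B : Matrix (Fin M) (Fin M) ℂ) (U : Matrix (Fin p) (Fin M) ℂ)
  (W : Matrix (Fin M) (Fin p) ℂ)

theorem det_Jp_add_tripleBlock :
    det (Jp p M + tripleBlock A B U W) =
      det (fromBlocks 0 0 0 1 - fromRows U A * fromCols W B) := by
  rw [← det_fromBlocks_one₂₂, ← det_submatrix_equiv_self (Equiv.sumAssoc _ _ _)]
  congr 1
  ext ((i | i) | i) ((j | j) | j) <;> simp [Jp, tripleBlock, one_apply]

-- Phrased with `m - p = q` so that `subst` can identify `Fin (m - p)` with `Fin q`.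
theorem detUA_eq_det_submatrix {m q : ℕ} (hq : m - p = q) (k l : Finset (Fin M))
    (hk : k.card = q) (hl : l.card = p + q) :
    detUA U A m k l = det ((fromRows U A).submatrix (Sum.map id (k.orderEmbOfFin hk))
      (l.orderEmbOfFin hl ∘ finSumFinEquiv)) := by
  subst hq
  rw [detUA, dif_pos ⟨hk, hl⟩]
  congr 1
  ext (i | i) j <;> rfl

theorem detWB_eq_det_submatrix {m q : ℕ} (hq : m - p = q) (k l : Finset (Fin M))
    (hk : k.card = q) (hl : l.card = p + q) :
    detWB W B m k l = det ((fromCols W B).submatrix (l.orderEmbOfFin hl ∘ finSumFinEquiv)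
      (Sum.map id (k.orderEmbOfFin hk))) := by
  subst hq
  rw [detWB, dif_pos ⟨hk, hl⟩]
  congr 1
  ext i (j | j) <;> rfl

theorem det_neg_fromRows_mul_fromCols_submatrix (k : Finset (Fin M)) :
    det ((-(fromRows U A * fromCols W B)).submatrix
        ((↑) : (univ : Finset (Fin p)).disjSum k → Fin p ⊕ Fin M) (↑)) =
      (-1) ^ (p + k.card) * ∑ l ∈ powersetCard (p + k.card) univ,
        detUA U A (p + k.card) k l * detWB W B (p + k.card) k l := by
  set r : Fin p ⊕ Fin k.card → Fin p ⊕ Fin M := Sum.map id (k.orderEmbOfFin rfl)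
  have hr : Injective r := injective_id.sumMap (k.orderEmbOfFin rfl).injective
  have hrange : Set.range r = (univ : Finset (Fin p)).disjSum k := by
    ext (i | i)
    · simp [r]
    · simp only [r, Set.mem_range, Sum.exists, Sum.map_inl, reduceCtorEq, exists_false,
        Sum.map_inr, Sum.inr.injEq, false_or, mem_coe, inr_mem_disjSum]
      rw [← Set.mem_range, range_orderEmbOfFin, mem_coe]
  let c (l : {l : Finset (Fin M) // l.card = Fintype.card (Fin p ⊕ Fin k.card)}) :
      Fin p ⊕ Fin k.card → Fin M :=
    l.1.orderEmbOfFin (l.2.trans (by simp)) ∘ finSumFinEquiv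
  have hc : ∀ l, Set.range (c l) = l := fun l => by
    rw [EquivLike.range_comp, range_orderEmbOfFin]
  have hmem : ∀ l : Finset (Fin M),
      l ∈ powersetCard (p + k.card) univ ↔ l.card = Fintype.card (Fin p ⊕ Fin k.card) := by
    simp
  rw [← det_submatrix_eq_det_submatrix_coe hr hrange]
  simp only [submatrix_neg, Pi.neg_apply, det_neg, Fintype.card_sum, Fintype.card_fin]
  rw [submatrix_mul _ _ _ id _ bijective_id,
    det_mul_eq_sum_det_submatrix_mul_det_submatrix _ _ c hc, sum_subtype _ hmem]
  refine congrArg _ (Fintype.sum_congr _ _ fun l => ?_)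
  have hl : l.1.card = p + k.card := l.2.trans (by simp)
  rw [detUA_eq_det_submatrix A U (Nat.add_sub_cancel_left p _) k l rfl hl,
    detWB_eq_det_submatrix B W (Nat.add_sub_cancel_left p _) k l rfl hl, submatrix_submatrix,
    submatrix_submatrix]
  rfl

end TripleBlock

theorem det_Jp_add_tripleBlock_eq_sum_minors_general (p M : ℕ) (A B : Matrix (Fin M) (Fin M) ℂ)
    (U : Matrix (Fin p) (Fin M) ℂ) (W : Matrix (Fin M) (Fin p) ℂ) :
    (Jp p M + tripleBlock A B U W).det =
      ∑ m ∈ Finset.Icc p M, (-1 : ℂ) ^ m *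
        ∑ k ∈ Finset.powersetCard (m - p) (Finset.univ : Finset (Fin M)),
          ∑ l ∈ Finset.powersetCard m (Finset.univ : Finset (Fin M)),
            detUA U A m k l * detWB W B m k l := by
  rw [det_Jp_add_tripleBlock, sub_eq_add_neg, det_fromBlocks_zero_one_add]
  simp_rw [det_neg_fromRows_mul_fromCols_submatrix]
  rw [sum_eq_sum_Icc_sum_powersetCard p
    (fun m k => (-1) ^ m * ∑ l ∈ powersetCard m univ, detUA U A m k l * detWB W B m k l)]
  · simp_rw [Fintype.card_fin, mul_sum]
  · intro m k hm
    rw [powersetCard_eq_empty.mpr (by simpa using hm), sum_empty, mul_zero]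

/-- Corollary 5.8 at `t = 1`:
`det(J_p + R) = Σ_{m=p}^{M} (−1)^m Σ_{k,l} det U_A(k,l) · det W_B(l,k)`,
where `k` runs over subsets of `{1,…,M}` of cardinality `m − p` and `l` over
subsets of cardinality `m`. -/
theorem det_Jp_add_tripleBlock_eq_sum_minors (p M : ℕ) (hp : 0 < p)
    (hM : 0 < M) (hpM : p ≤ M) (A B : Matrix (Fin M) (Fin M) ℂ)
    (U : Matrix (Fin p) (Fin M) ℂ) (W : Matrix (Fin M) (Fin p) ℂ) :
    (Jp p M + tripleBlock A B U W).det =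
      ∑ m ∈ Finset.Icc p M, (-1 : ℂ) ^ m *
        ∑ k ∈ Finset.powersetCard (m - p) (Finset.univ : Finset (Fin M)),
          ∑ l ∈ Finset.powersetCard m (Finset.univ : Finset (Fin M)),
            detUA U A m k l * detWB W B m k l :=
  det_Jp_add_tripleBlock_eq_sum_minors_general p M A B U W
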